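/- For ε ∈ (0, 1/2), the Gaussian margin is strictly smaller than the distributionally robust (Cantelli) margin: Φ⁻¹(1−ε) < √((1−ε)/ε). Hence the Gaussian-based chance constraint reformulation is less conservative than the moment-based robust reformulation. -/

import Mathlib

open MeasureTheory ProbabilityTheory

/-- CDF of the standard normal distribution. -/
noncomputable def stdNormalCDF : ℝ → ℝ := fun x => ProbabilityTheory.cdf (gaussianReal 0 1) x

/-- Quantile function (inverse CDF) of the standard normal distribution. -/
noncomputable def PhiInv (p : ℝ) : ℝ := sSup {x : ℝ | stdNormalCDF x ≤ p}

/-!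
With `s = √((1-ε)/ε)` one has `1 + s² = 1/ε` and `s ≥ 1`, so it suffices that the Gaussian tail
satisfies `Q(s) < 1/(1+s²)`. Integrating `φ(t) ≤ (t/s) φ(t)` over `t > s` and using `φ' = -tφ` gives
the Mills bound `Q(s) ≤ φ(s)/s`, and `φ(s)/s < 1/(1+s²)` for `s ≥ 1` because `√(2π) ≥ 2` and
`exp(s²/2) ≥ 1 + s²/2`. Hence `Φ(s) > 1 - ε`, and since `Φ` is continuous the quantile lies
strictly below `s`.
-/

open Real Set Filter Topology

lemma integral_Ioi_mul_exp_neg_mul_sq {b : ℝ} (hb : 0 < b) (z : ℝ) :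
    ∫ t in Ioi z, t * exp (-b * t ^ 2) = exp (-b * z ^ 2) / (2 * b) := by
  have hderiv (t : ℝ) :
      HasDerivAt (fun t ↦ -exp (-b * t ^ 2) / (2 * b)) (t * exp (-b * t ^ 2)) t := by
    have hsq : HasDerivAt (fun t ↦ -b * t ^ 2) (-b * (2 * t)) t := by
      simpa using (hasDerivAt_pow 2 t).const_mul (-b)
    refine (hsq.exp.fun_neg.div_const (2 * b)).congr_deriv ?_
    field_simp
  have hlim : Tendsto (fun t ↦ -exp (-b * t ^ 2) / (2 * b)) atTop (𝓝 0) := by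
    have : Tendsto (fun t : ℝ ↦ -b * t ^ 2) atTop atBot :=
      (tendsto_pow_atTop two_ne_zero).const_mul_atTop_of_neg (neg_neg_of_pos hb)
    simpa using ((tendsto_exp_atBot.comp this).neg).div_const (2 * b)
  rw [integral_Ioi_of_hasDerivAt_of_tendsto' (fun t _ ↦ hderiv t)
    (integrable_mul_exp_neg_mul_sq hb).integrableOn hlim]
  ring

lemma gaussianPDFReal_zero_one (t : ℝ) :
    gaussianPDFReal 0 1 t = (√(2 * π))⁻¹ * exp (-(1 / 2) * t ^ 2) := by
  simp only [gaussianPDFReal, NNReal.coe_one, mul_one, sub_zero]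
  ring_nf

lemma integral_Ioi_mul_gaussianPDFReal (z : ℝ) :
    ∫ t in Ioi z, t * gaussianPDFReal 0 1 t = gaussianPDFReal 0 1 z := by
  simp_rw [gaussianPDFReal_zero_one, mul_left_comm _ (√(2 * π))⁻¹, integral_const_mul,
    integral_Ioi_mul_exp_neg_mul_sq (one_half_pos (α := ℝ))]
  norm_num

lemma gaussianReal_real_Ioi_le {z : ℝ} (hz : 0 < z) :
    (gaussianReal 0 1).real (Ioi z) ≤ gaussianPDFReal 0 1 z / z := by
  rw [measureReal_def, gaussianReal_apply_eq_integral 0 one_ne_zero,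
    ENNReal.toReal_ofReal (integral_nonneg (gaussianPDFReal_nonneg 0 1))]
  have hint : Integrable (fun t ↦ t * gaussianPDFReal 0 1 t) := by
    simp_rw [gaussianPDFReal_zero_one, mul_left_comm _ (√(2 * π))⁻¹]
    exact (integrable_mul_exp_neg_mul_sq one_half_pos).const_mul _
  calc ∫ t in Ioi z, gaussianPDFReal 0 1 t
      ≤ ∫ t in Ioi z, z⁻¹ * (t * gaussianPDFReal 0 1 t) := by
        refine setIntegral_mono_on (integrable_gaussianPDFReal 0 1).integrableOn
          (hint.const_mul _).integrableOn measurableSet_Ioi fun t (ht : z < t) ↦ ?_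
        rw [← mul_assoc, le_mul_iff_one_le_left (gaussianPDFReal_pos 0 1 t one_ne_zero),
          inv_mul_eq_div, one_le_div hz]
        exact ht.le
    _ = gaussianPDFReal 0 1 z / z := by
        rw [integral_const_mul, integral_Ioi_mul_gaussianPDFReal, inv_mul_eq_div]

lemma gaussianPDFReal_div_lt_inv_one_add_sq {z : ℝ} (hz : 1 ≤ z) :
    gaussianPDFReal 0 1 z / z < (1 + z ^ 2)⁻¹ := by
  have hsqrt : 2 ≤ √(2 * π) := by
    rw [le_sqrt zero_le_two (by positivity)]
    nlinarith [pi_gt_three]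
  have hexp : 1 + z ^ 2 / 2 ≤ exp (z ^ 2 / 2) := by linarith [add_one_le_exp (z ^ 2 / 2)]
  have key : 1 + z ^ 2 < √(2 * π) * z * exp (z ^ 2 / 2) := by
    nlinarith [mul_pos (zero_lt_one.trans_le hz) (exp_pos (z ^ 2 / 2))]
  have heq : gaussianPDFReal 0 1 z / z = (√(2 * π) * z * exp (z ^ 2 / 2))⁻¹ := by
    rw [gaussianPDFReal_zero_one, show -(1 / 2) * z ^ 2 = -(z ^ 2 / 2) by ring, exp_neg]
    field_simp
  rw [heq]
  exact inv_strictAnti₀ (by positivity) key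

lemma gaussianReal_real_Ioi_lt {z : ℝ} (hz : 1 ≤ z) :
    (gaussianReal 0 1).real (Ioi z) < (1 + z ^ 2)⁻¹ :=
  (gaussianReal_real_Ioi_le (zero_lt_one.trans_le hz)).trans_lt
    (gaussianPDFReal_div_lt_inv_one_add_sq hz)

lemma stdNormalCDF_eq_one_sub (x : ℝ) :
    stdNormalCDF x = 1 - (gaussianReal 0 1).real (Ioi x) := by
  rw [stdNormalCDF, cdf_eq_real, ← compl_Ioi, probReal_compl_eq_one_sub measurableSet_Ioi]

lemma leftLim_cdf {μ : Measure ℝ} [IsProbabilityMeasure μ] [NullSingletonClass μ] (x : ℝ) :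
    Function.leftLim (cdf μ) x = cdf μ x := by
  have h := (cdf μ).measure_singleton x
  rw [measure_cdf, measure_singleton, eq_comm, ENNReal.ofReal_eq_zero, sub_nonpos] at h
  exact le_antisymm ((cdf μ).mono.leftLim_le le_rfl) h

lemma PhiInv_lt_of_lt_stdNormalCDF {p x : ℝ} (hp : 0 < p) (h : p < stdNormalCDF x) :
    PhiInv p < x := by
  have := nullSingletonClass_gaussianReal (μ := 0) one_ne_zero
  have hleft : Tendsto stdNormalCDF (𝓝[<] x) (𝓝 (stdNormalCDF x)) := by
    have := (cdf (gaussianReal 0 1)).mono.tendsto_leftLim x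
    rwa [leftLim_cdf] at this
  obtain ⟨x₀, hx₀p, hx₀x⟩ :=
    ((hleft.eventually (lt_mem_nhds h)).and self_mem_nhdsWithin).exists
  have hne : {y | stdNormalCDF y ≤ p}.Nonempty :=
    ((tendsto_cdf_atBot (gaussianReal 0 1)).eventually (gt_mem_nhds hp)).exists.imp
      fun _ hy ↦ hy.le
  refine (csSup_le hne fun y (hy : stdNormalCDF y ≤ p) ↦ ?_).trans_lt hx₀x
  by_contra! hxy
  exact (hy.trans_lt hx₀p).not_ge ((cdf (gaussianReal 0 1)).mono hxy.le)

/-- For `ε ∈ (0, 1/2)`, the Gaussian margin is strictly smaller than the distributionally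
robust (Cantelli) margin: `Φ⁻¹(1−ε) < √((1−ε)/ε)`. -/
theorem stmt18 (ε : ℝ) (hε : ε ∈ Set.Ioo (0:ℝ) (1/2)) :
    PhiInv (1 - ε) < Real.sqrt ((1 - ε) / ε) := by
  obtain ⟨hε0, hε2⟩ := hε
  set s := √((1 - ε) / ε)
  have hs_sq : s ^ 2 = (1 - ε) / ε := sq_sqrt (div_nonneg (by linarith) hε0.le)
  have hs : 1 ≤ s := one_le_sqrt.mpr ((one_le_div hε0).mpr (by linarith))
  have htail : (gaussianReal 0 1).real (Ioi s) < ε := by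
    have := gaussianReal_real_Ioi_lt hs
    rwa [hs_sq, show 1 + (1 - ε) / ε = ε⁻¹ by field_simp; ring, inv_inv] at this
  refine PhiInv_lt_of_lt_stdNormalCDF (by linarith) ?_
  rw [stdNormalCDF_eq_one_sub]
  linarith
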